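/- arXiv:2210.02425 — 2 statements merged into one kernel-verified Lean document; each statement's English description precedes it below -/
import Mathlib

section
/- Let Ω ⊆ ℝ² be an open bounded set, f ∈ L²(Ω) with values in [0,1], and μ > 0. Then the generalized two-phase anisotropic Chan–Vese functional G_μ admits a minimizer (u, c₁, c₂) ∈ BV(Ω) × [0,1]² over L²(Ω) × [0,1]², and this minimizer satisfies u(x) ∈ [0,1] for a.e. x ∈ Ω. -/
open MeasureTheory Set Filter
open scoped ENNReal

noncomputable section

/-- Divergence of a vector field on `ℝ²`. -/
def div2 (η : ℝ × ℝ → ℝ × ℝ) (x : ℝ × ℝ) : ℝ :=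
  fderiv ℝ (fun y => (η y).1) x (1, 0) + fderiv ℝ (fun y => (η y).2) x (0, 1)

/-- The anisotropic (`ℓ¹`) total variation `|Du|₁(Ω)`. -/
def anisoTV (Ω : Set (ℝ × ℝ)) (u : ℝ × ℝ → ℝ) : ℝ≥0∞ :=
  sSup { t : ℝ≥0∞ | ∃ η : ℝ × ℝ → ℝ × ℝ, ContDiff ℝ 1 η ∧ HasCompactSupport η ∧
    tsupport η ⊆ Ω ∧ (∀ x, |(η x).1| ≤ 1 ∧ |(η x).2| ≤ 1) ∧
    t = ENNReal.ofReal (∫ x in Ω, u x * div2 η x) }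

/-- The anisotropic perimeter `Per₁(E;Ω)`. -/
def Per1 (E Ω : Set (ℝ × ℝ)) : ℝ≥0∞ := anisoTV Ω (E.indicator 1)

/-- The anisotropic Rudin–Osher–Fatemi functional. -/
def AROF (Ω : Set (ℝ × ℝ)) (f : ℝ × ℝ → ℝ) (lam : ℝ) (u : ℝ × ℝ → ℝ) : ℝ≥0∞ :=
  anisoTV Ω u + ENNReal.ofReal (lam / 2 * ∫ x in Ω, (u x - f x) ^ 2)

open scoped Classical in
/-- The generalized two-phase anisotropic Chan–Vese functional `G_μ`. -/
def Gfun (Ω : Set (ℝ × ℝ)) (f : ℝ × ℝ → ℝ) (μ : ℝ) (u : ℝ × ℝ → ℝ) (c₁ c₂ : ℝ) : ℝ≥0∞ :=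
  anisoTV Ω u
    + ENNReal.ofReal (μ * ∫ x in Ω, (u x * (c₁ - f x) ^ 2 + (1 - u x) * (c₂ - f x) ^ 2))
    + (if ∀ᵐ x ∂(volume.restrict Ω), u x ∈ Icc (0 : ℝ) 1 then 0 else ⊤)

/-- The two-phase anisotropic Chan–Vese functional `ACV_μ`. -/
def ACV (Ω : Set (ℝ × ℝ)) (f : ℝ × ℝ → ℝ) (μ : ℝ) (Λ : Set (ℝ × ℝ)) (c₁ c₂ : ℝ) : ℝ≥0∞ :=
  Per1 Λ Ω + ENNReal.ofReal (μ * ((∫ x in Λ, (c₁ - f x) ^ 2) + ∫ x in Ω \ Λ, (c₂ - f x) ^ 2))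

/-- An axis-parallel closed rectangle. -/
def IsRectangle (R : Set (ℝ × ℝ)) : Prop :=
  ∃ a b c d : ℝ, R = Set.Icc a b ×ˢ Set.Icc c d

/-- A rectilinear polygon: a finite union of axis-parallel rectangles. -/
def IsRectilinear (E : Set (ℝ × ℝ)) : Prop :=
  ∃ (n : ℕ) (R : Fin n → Set (ℝ × ℝ)), (∀ i, IsRectangle (R i)) ∧ E = ⋃ i, R i

/-- `f` is piecewise constant on rectangles on `Ω`. -/
def PCR (Ω : Set (ℝ × ℝ)) (f : ℝ × ℝ → ℝ) : Prop :=
  ∃ S : Finset ℝ, (∀ᵐ x ∂(volume.restrict Ω), f x ∈ (S : Set ℝ)) ∧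
    ∀ c ∈ S, ∃ P : Set (ℝ × ℝ), IsRectilinear P ∧
      volume (({x ∈ Ω | f x = c} \ P) ∪ (P \ {x ∈ Ω | f x = c})) = 0

/-- `Ω` is a bounded open rectangle. -/
def IsOpenRectangle (Ω : Set (ℝ × ℝ)) : Prop :=
  ∃ a b c d : ℝ, a < b ∧ c < d ∧ Ω = Set.Ioo a b ×ˢ Set.Ioo c d

/-!
Identify `L²(Ω)` with its dual through the Riesz map and give it the weak-* topology. The
constraint set `{0 ≤ u ≤ 1}` is bounded, and it is weak-* closed because it is cut out by the
conditions `0 ≤ ∫_s u ≤ |s|` for measurable `s`; by Banach–Alaoglu it is compact, and so is its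
product with `[0,1]²`. On that product `G_μ` is weak-* lower semicontinuous: the total variation
is a supremum of the continuous functionals `u ↦ ∫ u div η`, and the fidelity term expands into a
polynomial in `c₁, c₂` whose coefficients are `∫ u`, `∫ u f` and constants. Hence `G_μ` attains
its minimum there, and off `{0 ≤ u ≤ 1}` it is `⊤` anyway.
-/

section RieszWeakDual

variable (E : Type*) [NormedAddCommGroup E] [InnerProductSpace ℝ E] [CompleteSpace E]

def rieszWeakDual : E ≃ₗ[ℝ] WeakDual ℝ E :=
  (InnerProductSpace.toDual ℝ E).toLinearEquiv.trans StrongDual.toWeakDual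

variable {E}

@[simp]
lemma rieszWeakDual_apply (u v : E) : rieszWeakDual E u v = inner ℝ u v := rfl

lemma norm_toStrongDual_rieszWeakDual (u : E) :
    ‖(rieszWeakDual E u).toStrongDual‖ = ‖u‖ :=
  (InnerProductSpace.toDual ℝ E).norm_map u

end RieszWeakDual

section UnitIntervalL2

variable {α : Type*} [MeasurableSpace α] (ν : Measure α)

def unitIntervalL2 : Set (Lp ℝ 2 ν) := {u | ∀ᵐ x ∂ν, u x ∈ Icc (0 : ℝ) 1}

variable {ν} in
lemma mem_unitIntervalL2 {u : Lp ℝ 2 ν} : u ∈ unitIntervalL2 ν ↔ ∀ᵐ x ∂ν, u x ∈ Icc (0 : ℝ) 1 :=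
  Iff.rfl

variable [IsFiniteMeasure ν]

lemma ae_mem_Icc_iff_forall_setIntegral {u : α → ℝ} (hu : Integrable u ν) :
    (∀ᵐ x ∂ν, u x ∈ Icc (0 : ℝ) 1) ↔
      ∀ s, MeasurableSet s → ∫ x in s, u x ∂ν ∈ Icc 0 (ν.real s) := by
  constructor
  · intro h s _
    refine ⟨setIntegral_nonneg_of_ae (h.mono fun x hx => hx.1), ?_⟩
    calc ∫ x in s, u x ∂ν ≤ ∫ _ in s, (1 : ℝ) ∂ν :=
          setIntegral_mono_ae hu.integrableOn (integrable_const 1).integrableOn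
            (h.mono fun x hx => hx.2)
      _ = ν.real s := by simp
  · intro h
    have h0 : 0 ≤ᵐ[ν] u := ae_nonneg_of_forall_setIntegral_nonneg hu fun s hs _ => (h s hs).1
    have h1 : 0 ≤ᵐ[ν] fun x => 1 - u x := by
      refine ae_nonneg_of_forall_setIntegral_nonneg ((integrable_const 1).sub hu) fun s hs _ => ?_
      rw [integral_sub (integrable_const 1).integrableOn hu.integrableOn]
      simpa using (h s hs).2
    filter_upwards [h0, h1] with x hx0 hx1
    exact ⟨hx0, sub_nonneg.mp hx1⟩

lemma norm_le_of_mem_unitIntervalL2 {u : Lp ℝ 2 ν} (hu : u ∈ unitIntervalL2 ν) :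
    ‖u‖ ≤ (ν.real univ) ^ (2⁻¹ : ℝ) := by
  have hbound : ∀ᵐ x ∂ν, ‖u x‖ ≤ 1 := Eventually.mono hu fun x hx => by
    rw [Real.norm_eq_abs, abs_le]; constructor <;> linarith [hx.1, hx.2]
  simpa [measureReal_def, measureUnivNNReal, ENNReal.coe_toNNReal_eq_toReal] using
    Lp.norm_le_of_ae_bound zero_le_one hbound

lemma rieszWeakDual_image_unitIntervalL2 :
    rieszWeakDual (Lp ℝ 2 ν) '' unitIntervalL2 ν = ⋂ (s) (hs : MeasurableSet s),
      {φ | φ (indicatorConstLp 2 hs (measure_ne_top ν s) 1) ∈ Icc 0 (ν.real s)} := by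
  ext φ
  obtain ⟨u, rfl⟩ := (rieszWeakDual (Lp ℝ 2 ν)).surjective φ
  simp only [(rieszWeakDual (Lp ℝ 2 ν)).injective.mem_set_image, unitIntervalL2, mem_ofPred_eq,
    mem_iInter, rieszWeakDual_apply, real_inner_comm _ u, L2.inner_indicatorConstLp_one]
  exact ae_mem_Icc_iff_forall_setIntegral ν ((Lp.memLp u).integrable one_le_two)

lemma isCompact_rieszWeakDual_image_unitIntervalL2 :
    IsCompact (rieszWeakDual (Lp ℝ 2 ν) '' unitIntervalL2 ν) := by
  refine WeakDual.isCompact_of_bounded_of_closed ?_ ?_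
  · refine (WeakDual.isBounded_closedBall 0 ((ν.real univ) ^ (2⁻¹ : ℝ))).subset ?_
    rintro _ ⟨u, hu, rfl⟩
    simpa [norm_toStrongDual_rieszWeakDual] using norm_le_of_mem_unitIntervalL2 ν hu
  · rw [rieszWeakDual_image_unitIntervalL2]
    exact isClosed_iInter fun s => isClosed_iInter fun _ =>
      isClosed_Icc.preimage (WeakDual.eval_continuous _)

end UnitIntervalL2

section TwoPhaseFidelity

variable {α : Type*} [MeasurableSpace α] (ν : Measure α)

lemma rieszWeakDual_apply_toLp (u : Lp ℝ 2 ν) {f : α → ℝ} (hf : MemLp f 2 ν) :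
    rieszWeakDual (Lp ℝ 2 ν) u (hf.toLp f) = ∫ x, u x * f x ∂ν := by
  rw [rieszWeakDual_apply, L2.inner_def]
  refine integral_congr_ae ?_
  filter_upwards [hf.coeFn_toLp] with x hx
  simp [hx, mul_comm]

variable [IsFiniteMeasure ν]

lemma integral_twoPhase_eq {u f : α → ℝ} (hu : MemLp u 2 ν) (hf : MemLp f 2 ν) (a b : ℝ) :
    ∫ x, (u x * (a - f x) ^ 2 + (1 - u x) * (b - f x) ^ 2) ∂ν =
      (a ^ 2 - b ^ 2) * ∫ x, u x ∂ν - 2 * (a - b) * ∫ x, u x * f x ∂ν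
        + (b ^ 2 * ν.real univ - 2 * b * ∫ x, f x ∂ν + ∫ x, f x ^ 2 ∂ν) := by
  have hu1 : Integrable u ν := hu.integrable one_le_two
  have hf1 : Integrable f ν := hf.integrable one_le_two
  have huf : Integrable (fun x => u x * f x) ν := hu.integrable_mul hf
  have hf2 : Integrable (fun x => f x ^ 2) ν := hf.integrable_sq
  have hlin : Integrable (fun x => (a ^ 2 - b ^ 2) * u x - 2 * (a - b) * (u x * f x)) ν :=
    (hu1.const_mul _).sub (huf.const_mul _)
  have hconst : Integrable (fun x => b ^ 2 - 2 * b * f x) ν :=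
    (integrable_const _).sub (hf1.const_mul _)
  have hrest : Integrable (fun x => b ^ 2 - 2 * b * f x + f x ^ 2) ν := hconst.add hf2
  calc ∫ x, (u x * (a - f x) ^ 2 + (1 - u x) * (b - f x) ^ 2) ∂ν
      = ∫ x, ((a ^ 2 - b ^ 2) * u x - 2 * (a - b) * (u x * f x)
          + (b ^ 2 - 2 * b * f x + f x ^ 2)) ∂ν := by
        congr 1 with x; ring
    _ = _ := by
        rw [integral_add hlin hrest, integral_sub (hu1.const_mul _) (huf.const_mul _),
          integral_add hconst hf2, integral_sub (integrable_const _) (hf1.const_mul _)]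
        simp only [integral_const_mul, integral_const, smul_eq_mul]
        ring

lemma rieszWeakDual_apply_one (u : Lp ℝ 2 ν) :
    rieszWeakDual (Lp ℝ 2 ν) u (indicatorConstLp 2 MeasurableSet.univ (measure_ne_top ν univ) 1)
      = ∫ x, u x ∂ν := by
  rw [rieszWeakDual_apply, real_inner_comm, L2.inner_indicatorConstLp_one, Measure.restrict_univ]

end TwoPhaseFidelity

section AnisotropicTV

def IsAdmissibleField (Ω : Set (ℝ × ℝ)) (η : ℝ × ℝ → ℝ × ℝ) : Prop :=
  ContDiff ℝ 1 η ∧ HasCompactSupport η ∧ tsupport η ⊆ Ω ∧ ∀ x, |(η x).1| ≤ 1 ∧ |(η x).2| ≤ 1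

lemma anisoTV_eq_iSup (Ω : Set (ℝ × ℝ)) (u : ℝ × ℝ → ℝ) :
    anisoTV Ω u = ⨆ η : {η // IsAdmissibleField Ω η},
      ENNReal.ofReal (∫ x in Ω, u x * div2 η.1 x) := by
  rw [anisoTV, iSup]
  congr 1
  ext t
  constructor
  · rintro ⟨η, h1, h2, h3, h4, rfl⟩
    exact ⟨⟨η, h1, h2, h3, h4⟩, rfl⟩
  · rintro ⟨⟨η, h1, h2, h3, h4⟩, rfl⟩
    exact ⟨η, h1, h2, h3, h4, rfl⟩

lemma anisoTV_congr_ae {Ω : Set (ℝ × ℝ)} {u v : ℝ × ℝ → ℝ} (h : u =ᵐ[volume.restrict Ω] v) :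
    anisoTV Ω u = anisoTV Ω v := by
  simp only [anisoTV_eq_iSup]
  refine iSup_congr fun η => congrArg ENNReal.ofReal (integral_congr_ae ?_)
  filter_upwards [h] with x hx
  rw [hx]

lemma continuous_div2 {η : ℝ × ℝ → ℝ × ℝ} (hη : ContDiff ℝ 1 η) : Continuous (div2 η) :=
  (((contDiff_fst.comp hη).continuous_fderiv one_ne_zero).clm_apply continuous_const).add
    (((contDiff_snd.comp hη).continuous_fderiv one_ne_zero).clm_apply continuous_const)

lemma HasCompactSupport.div2 {η : ℝ × ℝ → ℝ × ℝ} (hη : HasCompactSupport η) :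
    HasCompactSupport (div2 η) :=
  ((hη.comp_left (g := Prod.fst) rfl).fderiv_apply ℝ (1, 0)).add
    ((hη.comp_left (g := Prod.snd) rfl).fderiv_apply ℝ (0, 1))

lemma memLp_div2 {η : ℝ × ℝ → ℝ × ℝ} (hη : ContDiff ℝ 1 η) (hη' : HasCompactSupport η)
    (p : ℝ≥0∞) (ν : Measure (ℝ × ℝ)) [IsFiniteMeasureOnCompacts ν] : MemLp (div2 η) p ν :=
  (continuous_div2 hη).memLp_of_hasCompactSupport hη'.div2

def div2L2 {Ω : Set (ℝ × ℝ)} (η : {η // IsAdmissibleField Ω η}) : Lp ℝ 2 (volume.restrict Ω) :=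
  (memLp_div2 η.2.1 η.2.2.1 2 _).toLp (div2 η.1)

lemma anisoTV_eq_iSup_rieszWeakDual {Ω : Set (ℝ × ℝ)} (u : Lp ℝ 2 (volume.restrict Ω)) :
    anisoTV Ω u = ⨆ η : {η // IsAdmissibleField Ω η},
      ENNReal.ofReal (rieszWeakDual _ u (div2L2 η)) := by
  rw [anisoTV_eq_iSup]
  refine iSup_congr fun η => ?_
  rw [div2L2, rieszWeakDual_apply_toLp]

end AnisotropicTV

section ChanVese

variable {Ω : Set (ℝ × ℝ)} {f : ℝ × ℝ → ℝ} {μ : ℝ}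

lemma Gfun_congr_ae {u v : ℝ × ℝ → ℝ} (h : u =ᵐ[volume.restrict Ω] v) (c₁ c₂ : ℝ) :
    Gfun Ω f μ u c₁ c₂ = Gfun Ω f μ v c₁ c₂ := by
  have hfid : ∫ x in Ω, (u x * (c₁ - f x) ^ 2 + (1 - u x) * (c₂ - f x) ^ 2)
      = ∫ x in Ω, (v x * (c₁ - f x) ^ 2 + (1 - v x) * (c₂ - f x) ^ 2) :=
    integral_congr_ae (h.mono fun x hx => by simp only [hx])
  have hbox : (∀ᵐ x ∂(volume.restrict Ω), u x ∈ Icc (0 : ℝ) 1) ↔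
      ∀ᵐ x ∂(volume.restrict Ω), v x ∈ Icc (0 : ℝ) 1 :=
    eventually_congr (h.mono fun x hx => by rw [hx])
  rw [Gfun, Gfun, anisoTV_congr_ae h, hfid]
  congr 1
  split_ifs <;> tauto

lemma Gfun_eq_top {u : ℝ × ℝ → ℝ} (hu : ¬∀ᵐ x ∂(volume.restrict Ω), u x ∈ Icc (0 : ℝ) 1)
    (c₁ c₂ : ℝ) : Gfun Ω f μ u c₁ c₂ = ⊤ := by
  rw [Gfun, if_neg hu, add_top]

lemma anisoTV_le_Gfun (u : ℝ × ℝ → ℝ) (c₁ c₂ : ℝ) : anisoTV Ω u ≤ Gfun Ω f μ u c₁ c₂ :=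
  le_self_add.trans le_self_add

lemma Gfun_zero_ne_top : Gfun Ω f μ 0 0 0 ≠ ⊤ := by
  simp [Gfun, anisoTV_eq_iSup]

variable [IsFiniteMeasure (volume.restrict Ω)]

def GfunDual (hf : MemLp f 2 (volume.restrict Ω)) (μ : ℝ)
    (φ : WeakDual ℝ (Lp ℝ 2 (volume.restrict Ω))) (c₁ c₂ : ℝ) : ℝ≥0∞ :=
  (⨆ η : {η // IsAdmissibleField Ω η}, ENNReal.ofReal (φ (div2L2 η)))
    + ENNReal.ofReal (μ * ((c₁ ^ 2 - c₂ ^ 2)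
        * φ (indicatorConstLp 2 MeasurableSet.univ (measure_ne_top _ univ) 1)
      - 2 * (c₁ - c₂) * φ (hf.toLp f)
      + (c₂ ^ 2 * (volume.restrict Ω).real univ - 2 * c₂ * (∫ x in Ω, f x)
        + ∫ x in Ω, f x ^ 2)))

lemma Gfun_eq_GfunDual (hf : MemLp f 2 (volume.restrict Ω)) {u : Lp ℝ 2 (volume.restrict Ω)}
    (hu : u ∈ unitIntervalL2 _) (c₁ c₂ : ℝ) :
    Gfun Ω f μ u c₁ c₂ = GfunDual hf μ (rieszWeakDual _ u) c₁ c₂ := by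
  rw [Gfun, if_pos (mem_unitIntervalL2.1 hu), add_zero, GfunDual, anisoTV_eq_iSup_rieszWeakDual,
    integral_twoPhase_eq _ (Lp.memLp u) hf, rieszWeakDual_apply_one, rieszWeakDual_apply_toLp]

lemma lowerSemicontinuous_GfunDual (hf : MemLp f 2 (volume.restrict Ω)) (μ : ℝ) :
    LowerSemicontinuous fun p : WeakDual ℝ (Lp ℝ 2 (volume.restrict Ω)) × ℝ × ℝ =>
      GfunDual hf μ p.1 p.2.1 p.2.2 := by
  have heval (g : Lp ℝ 2 (volume.restrict Ω)) :
      Continuous fun p : WeakDual ℝ (Lp ℝ 2 (volume.restrict Ω)) × ℝ × ℝ => p.1 g :=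
    (WeakDual.eval_continuous g).comp continuous_fst
  refine LowerSemicontinuous.add (lowerSemicontinuous_iSup fun η =>
    (ENNReal.continuous_ofReal.comp (heval _)).lowerSemicontinuous) ?_
  refine (ENNReal.continuous_ofReal.comp ?_).lowerSemicontinuous
  have := heval (indicatorConstLp 2 MeasurableSet.univ (measure_ne_top _ univ) 1)
  have := heval (hf.toLp f)
  fun_prop

end ChanVese

theorem exists_minimizer_Gfun_general
    (Ω : Set (ℝ × ℝ)) (hΩbdd : Bornology.IsBounded Ω)
    (f : ℝ × ℝ → ℝ) (hf : MemLp f 2 (volume.restrict Ω))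
    (μ : ℝ) :
    ∃ (u : ℝ × ℝ → ℝ) (c₁ c₂ : ℝ),
      MemLp u 2 (volume.restrict Ω) ∧
      MemLp u 1 (volume.restrict Ω) ∧ anisoTV Ω u ≠ ⊤ ∧
      c₁ ∈ Icc (0 : ℝ) 1 ∧ c₂ ∈ Icc (0 : ℝ) 1 ∧
      (∀ᵐ x ∂(volume.restrict Ω), u x ∈ Icc (0 : ℝ) 1) ∧
      ∀ (v : ℝ × ℝ → ℝ) (a b : ℝ), MemLp v 2 (volume.restrict Ω) →
        a ∈ Icc (0 : ℝ) 1 → b ∈ Icc (0 : ℝ) 1 →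
        Gfun Ω f μ u c₁ c₂ ≤ Gfun Ω f μ v a b := by
  have : IsFiniteMeasure (volume.restrict Ω) :=
    isFiniteMeasure_restrict.2 hΩbdd.measure_lt_top.ne
  have h0 : (0 : Lp ℝ 2 (volume.restrict Ω)) ∈ unitIntervalL2 _ :=
    (Lp.coeFn_zero ℝ 2 _).mono fun x hx => by rw [hx]; exact left_mem_Icc.2 zero_le_one
  have hne : ((rieszWeakDual _ '' unitIntervalL2 (volume.restrict Ω)) ×ˢ
      Icc (0 : ℝ) 1 ×ˢ Icc (0 : ℝ) 1).Nonempty :=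
    ⟨(rieszWeakDual _ 0, 0, 0), ⟨0, h0, rfl⟩, left_mem_Icc.2 zero_le_one,
      left_mem_Icc.2 zero_le_one⟩
  obtain ⟨⟨_, c₁, c₂⟩, ⟨⟨u, hu, rfl⟩, hc₁, hc₂⟩, hmin⟩ := LowerSemicontinuousOn.exists_isMinOn hne
    ((isCompact_rieszWeakDual_image_unitIntervalL2 _).prod (isCompact_Icc.prod isCompact_Icc))
    ((lowerSemicontinuous_GfunDual hf μ).lowerSemicontinuousOn _)
  have hGmin (v : ℝ × ℝ → ℝ) (a b : ℝ) (hv : MemLp v 2 (volume.restrict Ω))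
      (ha : a ∈ Icc (0 : ℝ) 1) (hb : b ∈ Icc (0 : ℝ) 1) :
      Gfun Ω f μ u c₁ c₂ ≤ Gfun Ω f μ v a b := by
    by_cases hv01 : ∀ᵐ x ∂(volume.restrict Ω), v x ∈ Icc (0 : ℝ) 1
    · have hvK : hv.toLp v ∈ unitIntervalL2 _ := by
        filter_upwards [hv.coeFn_toLp, hv01] with x hx hx01
        rwa [hx]
      rw [← Gfun_congr_ae hv.coeFn_toLp, Gfun_eq_GfunDual hf hu, Gfun_eq_GfunDual hf hvK]
      exact isMinOn_iff.1 hmin (rieszWeakDual _ (hv.toLp v), a, b) ⟨⟨_, hvK, rfl⟩, ha, hb⟩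
    · rw [Gfun_eq_top hv01]
      exact le_top
  refine ⟨u, c₁, c₂, Lp.memLp u, (Lp.memLp u).mono_exponent one_le_two, ?_, hc₁, hc₂, hu, hGmin⟩
  exact ne_top_of_le_ne_top Gfun_zero_ne_top <| (anisoTV_le_Gfun _ _ _).trans <|
    hGmin 0 0 0 (memLp_const 0) (left_mem_Icc.2 zero_le_one) (left_mem_Icc.2 zero_le_one)

/-- Existence of a minimizer of the generalized two-phase anisotropic
Chan–Vese functional `G_μ` over `L²(Ω) × [0,1]²`; the minimizer lies in `BV(Ω) × [0,1]²`
and takes values in `[0,1]` a.e. -/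
theorem exists_minimizer_Gfun
    (Ω : Set (ℝ × ℝ)) (hΩopen : IsOpen Ω) (hΩbdd : Bornology.IsBounded Ω)
    (f : ℝ × ℝ → ℝ) (hf : MemLp f 2 (volume.restrict Ω))
    (hf01 : ∀ᵐ x ∂(volume.restrict Ω), f x ∈ Icc (0 : ℝ) 1)
    (μ : ℝ) (hμ : 0 < μ) :
    ∃ (u : ℝ × ℝ → ℝ) (c₁ c₂ : ℝ),
      MemLp u 2 (volume.restrict Ω) ∧
      MemLp u 1 (volume.restrict Ω) ∧ anisoTV Ω u ≠ ⊤ ∧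
      c₁ ∈ Icc (0 : ℝ) 1 ∧ c₂ ∈ Icc (0 : ℝ) 1 ∧
      (∀ᵐ x ∂(volume.restrict Ω), u x ∈ Icc (0 : ℝ) 1) ∧
      ∀ (v : ℝ × ℝ → ℝ) (a b : ℝ), MemLp v 2 (volume.restrict Ω) →
        a ∈ Icc (0 : ℝ) 1 → b ∈ Icc (0 : ℝ) 1 →
        Gfun Ω f μ u c₁ c₂ ≤ Gfun Ω f μ v a b :=
  exists_minimizer_Gfun_general Ω hΩbdd f hf μ
end
end

section
/- Let L ≥ 4, R ≥ L + 3, Ω := (−R,R)², and let C₁ := (−1,1) × (−L−1, −L+1), C₂ := (−1/2,1/2)², C₃ := (−2,2) × (L−2, L+2) (ℓ^∞ balls of radii 1, 1/2, 2), A := C₁ ∪ C₂ ∪ C₃, and f := χ_{C₁} + χ_{C₂} + (1/2)χ_{C₃}. Set c₁ = 1, c₂ = 9/17, c₃ = 0 (so that c₂ = ∫_{C₂∪C₃} f /|C₂∪C₃| and c₃ = ∫_{Ω∖Ā} f /|Ω∖Ā|), and μ₁ = 85/8, μ₂ = 1445/72, μ₃ = 85/9. Then for the three-phase anisotropic Chan–Vese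 functional CV³_{1,μ} one has CV³_{1,μ}({C₁∪C₂, C₃, Ω∖Ā}, (c₁,c₂,c₃)) = (725/72)|C₁| < (733/72)|C₁| = CV³_{1,μ}({C₁, C₂∪C₃, Ω∖Ā}, (c₁,c₂,c₃)). In particular the partition {C₁, C₂∪C₃, Ω∖Ā} obtained by thresholding the AROF solution does not minimize Λ ↦ CV³_{1,μ}(Λ, c) over three-part partitions of Ω. -/
open MeasureTheory Set Filter
open scoped ENNReal

noncomputable section

noncomputable section

/-- The multiphase anisotropic Chan–Vese functional
`CV^n_{1,μ}({Ωᵢ}, c) = Σᵢ ( Per₁(∪_{j≤i} Ω_j; Ω) + μᵢ ∫_{Ωᵢ} (cᵢ − f)² )`. -/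
def CVn (Ω : Set (ℝ × ℝ)) (f : ℝ × ℝ → ℝ) (n : ℕ)
    (P : Fin n → Set (ℝ × ℝ)) (c μ : Fin n → ℝ) : ℝ≥0∞ :=
  ∑ i : Fin n,
    (Per1 (⋃ j : Fin n, ⋃ (_ : j ≤ i), P j) Ω
      + ENNReal.ofReal (μ i * ∫ x in P i, (c i - f x) ^ 2))

/-- A partition of `Ω` into `n` pairwise disjoint nonempty measurable parts
(with union `Ω` up to a Lebesgue-null set). -/
def IsPartition (Ω : Set (ℝ × ℝ)) (n : ℕ) (P : Fin n → Set (ℝ × ℝ)) : Prop :=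
  (∀ i, MeasurableSet (P i)) ∧ (∀ i, (P i).Nonempty) ∧ (∀ i, P i ⊆ Ω) ∧
    Pairwise (Function.onFun Disjoint P) ∧
    volume ((Ω \ ⋃ i, P i) ∪ ((⋃ i, P i) \ Ω)) = 0

end

/-!
The anisotropic perimeter of a union of open rectangles whose `1/2`-neighbourhoods lie in `Ω` and
have pairwise disjoint vertical projections is the sum of the `ℓ¹`-perimeters
`2 (width + height)`: the Gauss–Green formula bounds the flux of every admissible field through
each rectangle by its perimeter, and a smooth field equal to the outer normal along every edge
attains the bound. A set filling `Ω` up to a null set has perimeter zero. Both values of `CV³` are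
then explicit: `{C₁ ∪ C₂, C₃, Ω ∖ Ā}` pays perimeters `12 + 28` and fidelity `5/18`, while the
thresholded partition pays perimeters `8 + 28` and fidelity `85/18`.
-/

namespace AnisotropicPerimeter

open Function Real

section Cutoff

def plateau (a b x : ℝ) : ℝ :=
  smoothTransition (2 * (x - a) + 1) * smoothTransition (2 * (b - x) + 1)

/-- Profile of the outer normal of `[a, b]`. -/
def signedPlateau (a b x : ℝ) : ℝ :=
  plateau a b x * (2 * smoothTransition ((x - a) / (b - a)) - 1)

variable {a b x : ℝ}

lemma contDiff_plateau {n : ℕ∞} : ContDiff ℝ n (plateau a b) :=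
  (smoothTransition.contDiff.comp (by fun_prop)).mul (smoothTransition.contDiff.comp (by fun_prop))

lemma contDiff_signedPlateau {n : ℕ∞} : ContDiff ℝ n (signedPlateau a b) :=
  contDiff_plateau.mul <| (contDiff_const.mul <| smoothTransition.contDiff.comp <|
    (contDiff_id.sub contDiff_const).div_const _).sub contDiff_const

lemma abs_plateau_le_one : |plateau a b x| ≤ 1 := by
  rw [plateau, abs_of_nonneg (mul_nonneg (smoothTransition.nonneg _) (smoothTransition.nonneg _))]
  exact mul_le_one₀ (smoothTransition.le_one _) (smoothTransition.nonneg _)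
    (smoothTransition.le_one _)

lemma abs_signedPlateau_le_one : |signedPlateau a b x| ≤ 1 := by
  have h₀ := smoothTransition.nonneg ((x - a) / (b - a))
  have h₁ := smoothTransition.le_one ((x - a) / (b - a))
  rw [signedPlateau, abs_mul]
  exact mul_le_one₀ abs_plateau_le_one (abs_nonneg _) (abs_le.2 ⟨by linarith, by linarith⟩)

lemma plateau_eq_one (hx : x ∈ Icc a b) : plateau a b x = 1 := by
  rw [plateau, smoothTransition.one_of_one_le (by linarith [hx.1]),
    smoothTransition.one_of_one_le (by linarith [hx.2]), mul_one]

lemma support_plateau_subset : support (plateau a b) ⊆ Ioo (a - 1/2) (b + 1/2) := by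
  intro x hx
  by_contra h
  rcases not_and_or.1 h with h | h <;> apply hx
  · rw [plateau, smoothTransition.zero_of_nonpos (x := 2 * (x - a) + 1) (by linarith), zero_mul]
  · rw [plateau, smoothTransition.zero_of_nonpos (x := 2 * (b - x) + 1) (by linarith), mul_zero]

lemma support_signedPlateau_subset : support (signedPlateau a b) ⊆ Ioo (a - 1/2) (b + 1/2) :=
  (support_mul_subset_left _ _).trans support_plateau_subset

lemma signedPlateau_left (hab : a < b) : signedPlateau a b a = -1 := by
  rw [signedPlateau, plateau_eq_one ⟨le_rfl, hab.le⟩, sub_self, zero_div, smoothTransition.zero]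
  norm_num

lemma signedPlateau_right (hab : a < b) : signedPlateau a b b = 1 := by
  rw [signedPlateau, plateau_eq_one ⟨hab.le, le_rfl⟩, div_self (sub_ne_zero.2 hab.ne'),
    smoothTransition.one]
  norm_num

end Cutoff

section Divergence

variable {η : ℝ × ℝ → ℝ × ℝ}

lemma continuous_div2 (hη : ContDiff ℝ 1 η) : Continuous (div2 η) :=
  ((contDiff_fst.comp hη).continuous_fderiv one_ne_zero).clm_apply continuous_const |>.add
    (((contDiff_snd.comp hη).continuous_fderiv one_ne_zero).clm_apply continuous_const)

lemma support_div2_subset : support (div2 η) ⊆ tsupport η := by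
  intro x hx
  by_contra h
  have h₁ : x ∉ tsupport (fun y => (η y).1) := fun h' => h (tsupport_comp_subset rfl η h')
  have h₂ : x ∉ tsupport (fun y => (η y).2) := fun h' => h (tsupport_comp_subset rfl η h')
  apply hx
  rw [div2, notMem_support.1 fun h' => h₁ (support_fderiv_subset ℝ h'),
    notMem_support.1 fun h' => h₂ (support_fderiv_subset ℝ h')]
  simp

lemma integral_div2_rect (hη : ContDiff ℝ 1 η) {a b c d : ℝ} (hab : a ≤ b) (hcd : c ≤ d) :
    ∫ x in Ioo a b ×ˢ Ioo c d, div2 η x =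
      (∫ x in a..b, (η (x, d)).2) - (∫ x in a..b, (η (x, c)).2)
        + (∫ y in c..d, (η (b, y)).1) - ∫ y in c..d, (η (a, y)).1 := by
  have h₁ : ContDiff ℝ 1 fun y => (η y).1 := contDiff_fst.comp hη
  have h₂ : ContDiff ℝ 1 fun y => (η y).2 := contDiff_snd.comp hη
  rw [Measure.volume_eq_prod, setIntegral_congr_set
    (Measure.set_prod_ae_eq Ioo_ae_eq_Icc Ioo_ae_eq_Icc), Icc_prod_Icc, ← Measure.volume_eq_prod]
  exact integral_divergence_prod_Icc_of_hasFDerivAt_off_countable_of_le _ _ _ _ (a, c) (b, d)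
    ⟨hab, hcd⟩ ∅ countable_empty h₁.continuous.continuousOn h₂.continuous.continuousOn
    (fun x _ => (h₁.differentiable one_ne_zero x).hasFDerivAt)
    (fun x _ => (h₂.differentiable one_ne_zero x).hasFDerivAt)
    (continuous_div2 hη).integrableOn_Icc

lemma integral_div2_rect_le (hη : ContDiff ℝ 1 η) (hη₁ : ∀ x, |(η x).1| ≤ 1 ∧ |(η x).2| ≤ 1)
    {a b c d : ℝ} (hab : a ≤ b) (hcd : c ≤ d) :
    ∫ x in Ioo a b ×ˢ Ioo c d, div2 η x ≤ 2 * (b - a) + 2 * (d - c) := by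
  have bound : ∀ {u v : ℝ} {g : ℝ → ℝ}, u ≤ v → (∀ x, |g x| ≤ 1) → |∫ x in u..v, g x| ≤ v - u :=
    fun {u v g} huv hg => by
      simpa [abs_of_nonneg (sub_nonneg.2 huv)] using
        intervalIntegral.norm_integral_le_of_norm_le_const (a := u) (b := v) (f := g) (C := 1)
          fun x _ => hg x
  rw [integral_div2_rect hη hab hcd]
  have k₁ := abs_le.1 (bound (g := fun x => (η (x, d)).2) hab fun _ => (hη₁ _).2)
  have k₂ := abs_le.1 (bound (g := fun x => (η (x, c)).2) hab fun _ => (hη₁ _).2)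
  have k₃ := abs_le.1 (bound (g := fun y => (η (b, y)).1) hcd fun _ => (hη₁ _).1)
  have k₄ := abs_le.1 (bound (g := fun y => (η (a, y)).1) hcd fun _ => (hη₁ _).1)
  linarith [k₁.2, k₂.1, k₃.2, k₄.1]

lemma integral_div2_eq_zero (hη : ContDiff ℝ 1 η) (hc : HasCompactSupport η) :
    ∫ x, div2 η x = 0 := by
  obtain ⟨r, hr⟩ := (Metric.isBounded_iff_subset_closedBall 0).1 hc.isCompact.isBounded
  have hout : ∀ x y : ℝ, r < |x| ∨ r < |y| → η (x, y) = 0 := fun x y hxy =>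
    image_eq_zero_of_notMem_tsupport fun h => by
      have := mem_closedBall_zero_iff.1 (hr h)
      rw [Prod.norm_def, Real.norm_eq_abs, Real.norm_eq_abs] at this
      rcases hxy with h' | h' <;> linarith [le_max_left |x| |y|, le_max_right |x| |y|]
  set ρ := |r| + 1
  have hρ₀ : 0 < ρ := by positivity
  have hρ : r < |ρ| ∧ r < |-ρ| := by
    rw [abs_neg, abs_of_pos (by positivity)]
    exact ⟨by linarith [le_abs_self r], by linarith [le_abs_self r]⟩
  have hbox : tsupport η ⊆ Ioo (-ρ) ρ ×ˢ Ioo (-ρ) ρ := fun x hx => by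
    have := mem_closedBall_zero_iff.1 (hr hx)
    rw [Prod.norm_def, Real.norm_eq_abs, Real.norm_eq_abs, max_le_iff] at this
    exact ⟨abs_lt.1 (by linarith [this.1, le_abs_self r]),
      abs_lt.1 (by linarith [this.2, le_abs_self r])⟩
  rw [← setIntegral_eq_integral_of_forall_compl_eq_zero fun x hx =>
      notMem_support.1 fun h => hx (hbox (support_div2_subset h)),
    integral_div2_rect hη (by linarith) (by linarith)]
  simp [hout _ _ (Or.inl hρ.1), hout _ _ (Or.inl hρ.2), hout _ _ (Or.inr hρ.1),
    hout _ _ (Or.inr hρ.2)]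

end Divergence

lemma Per1_eq_zero_of_measure_diff_eq_zero {E Ω : Set (ℝ × ℝ)} (h : volume (Ω \ E) = 0) :
    Per1 E Ω = 0 := by
  refine le_antisymm (sSup_le ?_) zero_le
  rintro t ⟨η, hη, hc, hηΩ, -, rfl⟩
  have hdiv : ∀ x ∉ Ω, div2 η x = 0 := fun x hx =>
    notMem_support.1 fun h' => hx (hηΩ (support_div2_subset h'))
  have hae : ∀ᵐ x, E.indicator 1 x * div2 η x = div2 η x := by
    filter_upwards [measure_eq_zero_iff_ae_notMem.1 h] with x hx
    by_cases hxE : x ∈ E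
    · simp [hxE]
    · simp [hxE, hdiv x fun hxΩ => hx ⟨hxΩ, hxE⟩]
  rw [integral_congr_ae (ae_restrict_of_ae hae),
    setIntegral_eq_integral_of_forall_compl_eq_zero hdiv, integral_div2_eq_zero hη hc,
    ENNReal.ofReal_zero]

lemma abs_sum_le_one {ι : Type*} {s : Finset ι} {g : ι → ℝ} (hg : ∀ i, |g i| ≤ 1)
    (hs : (s : Set ι).Pairwise fun i j => g i = 0 ∨ g j = 0) : |∑ i ∈ s, g i| ≤ 1 := by
  by_cases h : ∀ i ∈ s, g i = 0
  · simp [Finset.sum_eq_zero h]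
  · obtain ⟨i, hi, hgi⟩ : ∃ i ∈ s, g i ≠ 0 := by simpa using h
    rw [Finset.sum_eq_single_of_mem i hi fun j hj hji => (hs hj hi hji).resolve_right hgi]
    exact hg i

section Rectangles

variable {ι : Type*} (s : Finset ι) (a b c d : ι → ℝ)

/-- A test field equal to the outer normal along the edges of each rectangle
`(a i, b i) × (c i, d i)` and supported in their `1/2`-neighbourhoods. -/
def rectField (x : ℝ × ℝ) : ℝ × ℝ :=
  (∑ i ∈ s, signedPlateau (a i) (b i) x.1 * plateau (c i) (d i) x.2,
    ∑ i ∈ s, plateau (a i) (b i) x.1 * signedPlateau (c i) (d i) x.2)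

lemma contDiff_rectField : ContDiff ℝ 1 (rectField s a b c d) :=
  (ContDiff.sum fun _ _ => (contDiff_signedPlateau.comp contDiff_fst).mul
      (contDiff_plateau.comp contDiff_snd)).prodMk
    (ContDiff.sum fun _ _ => (contDiff_plateau.comp contDiff_fst).mul
      (contDiff_signedPlateau.comp contDiff_snd))

lemma rectField_eq_zero {x : ℝ × ℝ}
    (hx : x ∉ ⋃ i ∈ s, Icc (a i - 1/2) (b i + 1/2) ×ˢ Icc (c i - 1/2) (d i + 1/2)) :
    rectField s a b c d x = 0 := by
  have hzero : ∀ i ∈ s, (signedPlateau (a i) (b i) x.1 = 0 ∧ plateau (a i) (b i) x.1 = 0) ∨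
      (plateau (c i) (d i) x.2 = 0 ∧ signedPlateau (c i) (d i) x.2 = 0) := fun i hi => by
    have hxi : x.1 ∉ Icc (a i - 1/2) (b i + 1/2) ∨ x.2 ∉ Icc (c i - 1/2) (d i + 1/2) := by
      by_contra! h
      exact hx (mem_biUnion hi ⟨h.1, h.2⟩)
    refine hxi.imp (fun h => ⟨?_, ?_⟩) (fun h => ⟨?_, ?_⟩) <;>
      refine notMem_support.1 fun h' => h (Ioo_subset_Icc_self ?_)
    exacts [support_signedPlateau_subset h', support_plateau_subset h',
      support_plateau_subset h', support_signedPlateau_subset h']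
  refine Prod.ext (Finset.sum_eq_zero fun i hi => ?_) (Finset.sum_eq_zero fun i hi => ?_) <;>
    rcases hzero i hi with h | h <;> simp [h.1, h.2]

lemma tsupport_rectField_subset {Ω : Set (ℝ × ℝ)}
    (hΩ : ∀ i ∈ s, Icc (a i - 1/2) (b i + 1/2) ×ˢ Icc (c i - 1/2) (d i + 1/2) ⊆ Ω) :
    tsupport (rectField s a b c d) ⊆ Ω :=
  (closure_minimal
    (fun _ hx => by_contra fun h => mem_support.1 hx (rectField_eq_zero s a b c d h))
    (s.finite_toSet.isClosed_biUnion fun _ _ => isClosed_Icc.prod isClosed_Icc)).trans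
    (iUnion₂_subset hΩ)

lemma hasCompactSupport_rectField : HasCompactSupport (rectField s a b c d) :=
  .intro' (s.finite_toSet.isCompact_biUnion fun _ _ => isCompact_Icc.prod isCompact_Icc)
    (s.finite_toSet.isClosed_biUnion fun _ _ => isClosed_Icc.prod isClosed_Icc)
    fun _ => rectField_eq_zero s a b c d

variable {s c d}

lemma abs_rectField_le_one
    (hdisj : (s : Set ι).PairwiseDisjoint fun i => Ioo (c i - 1/2) (d i + 1/2)) (x : ℝ × ℝ) :
    |(rectField s a b c d x).1| ≤ 1 ∧ |(rectField s a b c d x).2| ≤ 1 := by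
  have pairwise : ∀ {g : ι → ℝ}, (∀ i, g i ≠ 0 → x.2 ∈ Ioo (c i - 1/2) (d i + 1/2)) →
      (s : Set ι).Pairwise fun i j => g i = 0 ∨ g j = 0 := fun {g} hg i hi j hj hij => by
    by_contra! h
    exact hij (hdisj.elim_set hi hj _ (hg i h.1) (hg j h.2))
  refine ⟨abs_sum_le_one (fun i => ?_) (pairwise fun i h => ?_),
    abs_sum_le_one (fun i => ?_) (pairwise fun i h => ?_)⟩
  · rw [abs_mul]
    exact mul_le_one₀ abs_signedPlateau_le_one (abs_nonneg _) abs_plateau_le_one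
  · exact support_plateau_subset (right_ne_zero_of_mul h)
  · rw [abs_mul]
    exact mul_le_one₀ abs_plateau_le_one (abs_nonneg _) abs_signedPlateau_le_one
  · exact support_signedPlateau_subset (right_ne_zero_of_mul h)

lemma notMem_Ioo_of_mem_Icc
    (hdisj : (s : Set ι).PairwiseDisjoint fun i => Ioo (c i - 1/2) (d i + 1/2))
    {i j : ι} (hi : i ∈ s) (hj : j ∈ s) (hij : i ≠ j) {y : ℝ} (hy : y ∈ Icc (c j) (d j)) :
    y ∉ Ioo (c i - 1/2) (d i + 1/2) :=
  fun h => hij (hdisj.elim_set hi hj y h ⟨by linarith [hy.1], by linarith [hy.2]⟩)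

lemma rectField_fst_of_mem
    (hdisj : (s : Set ι).PairwiseDisjoint fun i => Ioo (c i - 1/2) (d i + 1/2))
    {j : ι} (hj : j ∈ s) {x y : ℝ} (hy : y ∈ Icc (c j) (d j)) :
    (rectField s a b c d (x, y)).1 = signedPlateau (a j) (b j) x := by
  have hvanish : ∀ i ∈ s, i ≠ j → plateau (c i) (d i) y = 0 := fun i hi hij =>
    notMem_support.1 fun h => notMem_Ioo_of_mem_Icc hdisj hi hj hij hy (support_plateau_subset h)
  rw [show (rectField s a b c d (x, y)).1 =
      ∑ i ∈ s, signedPlateau (a i) (b i) x * plateau (c i) (d i) y from rfl,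
    Finset.sum_eq_single_of_mem j hj fun i hi hij => by rw [hvanish i hi hij, mul_zero],
    plateau_eq_one hy, mul_one]

lemma rectField_snd_of_mem
    (hdisj : (s : Set ι).PairwiseDisjoint fun i => Ioo (c i - 1/2) (d i + 1/2))
    {j : ι} (hj : j ∈ s) {x y : ℝ} (hx : x ∈ Icc (a j) (b j)) (hy : y ∈ Icc (c j) (d j)) :
    (rectField s a b c d (x, y)).2 = signedPlateau (c j) (d j) y := by
  have hvanish : ∀ i ∈ s, i ≠ j → signedPlateau (c i) (d i) y = 0 := fun i hi hij =>
    notMem_support.1 fun h =>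
      notMem_Ioo_of_mem_Icc hdisj hi hj hij hy (support_signedPlateau_subset h)
  rw [show (rectField s a b c d (x, y)).2 =
      ∑ i ∈ s, plateau (a i) (b i) x * signedPlateau (c i) (d i) y from rfl,
    Finset.sum_eq_single_of_mem j hj fun i hi hij => by rw [hvanish i hi hij, mul_zero],
    plateau_eq_one hx, one_mul]

lemma integral_div2_rectField
    (hdisj : (s : Set ι).PairwiseDisjoint fun i => Ioo (c i - 1/2) (d i + 1/2))
    {j : ι} (hj : j ∈ s) (hab : a j < b j) (hcd : c j < d j) :
    ∫ x in Ioo (a j) (b j) ×ˢ Ioo (c j) (d j), div2 (rectField s a b c d) x =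
      2 * (b j - a j) + 2 * (d j - c j) := by
  have hconst : ∀ {u v k : ℝ} (g : ℝ → ℝ), u ≤ v → (∀ x ∈ Icc u v, g x = k) →
      ∫ x in u..v, g x = (v - u) * k := fun {u v k} g huv hg => by
    rw [intervalIntegral.integral_congr (g := fun _ => k) fun x hx =>
      hg x (by rwa [uIcc_of_le huv] at hx)]
    simp
  have hc : c j ∈ Icc (c j) (d j) := ⟨le_rfl, hcd.le⟩
  have hd : d j ∈ Icc (c j) (d j) := ⟨hcd.le, le_rfl⟩
  rw [integral_div2_rect (contDiff_rectField s a b c d) hab.le hcd.le,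
    hconst _ hab.le fun x hx => rectField_snd_of_mem a b hdisj hj hx hd,
    hconst _ hab.le fun x hx => rectField_snd_of_mem a b hdisj hj hx hc,
    hconst _ hcd.le fun y hy => rectField_fst_of_mem a b hdisj hj hy,
    hconst _ hcd.le fun y hy => rectField_fst_of_mem a b hdisj hj hy,
    signedPlateau_left hab, signedPlateau_right hab, signedPlateau_left hcd,
    signedPlateau_right hcd]
  ring

variable (s c d)

theorem Per1_biUnion_rect {Ω : Set (ℝ × ℝ)} (hab : ∀ i ∈ s, a i < b i) (hcd : ∀ i ∈ s, c i < d i)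
    (hdisj : (s : Set ι).PairwiseDisjoint fun i => Ioo (c i - 1/2) (d i + 1/2))
    (hΩ : ∀ i ∈ s, Icc (a i - 1/2) (b i + 1/2) ×ˢ Icc (c i - 1/2) (d i + 1/2) ⊆ Ω) :
    Per1 (⋃ i ∈ s, Ioo (a i) (b i) ×ˢ Ioo (c i) (d i)) Ω =
      ENNReal.ofReal (∑ i ∈ s, (2 * (b i - a i) + 2 * (d i - c i))) := by
  set E := ⋃ i ∈ s, Ioo (a i) (b i) ×ˢ Ioo (c i) (d i)
  have hEΩ : E ⊆ Ω := iUnion₂_subset fun i hi => (Set.prod_mono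
    (Ioo_subset_Icc_self.trans (Icc_subset_Icc (by linarith) (by linarith)))
    (Ioo_subset_Icc_self.trans (Icc_subset_Icc (by linarith) (by linarith)))).trans (hΩ i hi)
  have hrect : (s : Set ι).Pairwise (Disjoint on fun i => Ioo (a i) (b i) ×ˢ Ioo (c i) (d i)) :=
    fun i hi j hj hij => disjoint_prod.2 <| Or.inr <|
      (hdisj hi hj hij).mono (Ioo_subset_Ioo (by linarith) (by linarith))
        (Ioo_subset_Ioo (by linarith) (by linarith))
  have hsplit : ∀ η, ContDiff ℝ 1 η → ∫ x in Ω, E.indicator 1 x * div2 η x =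
      ∑ i ∈ s, ∫ x in Ioo (a i) (b i) ×ˢ Ioo (c i) (d i), div2 η x := fun η hη => by
    have hE : MeasurableSet E :=
      s.measurableSet_biUnion fun _ _ => measurableSet_Ioo.prod measurableSet_Ioo
    have hind : ∀ x, E.indicator 1 x * div2 η x = E.indicator (div2 η) x := fun x => by
      by_cases hx : x ∈ E <;> simp [hx]
    simp_rw [hind]
    rw [setIntegral_indicator hE, inter_eq_self_of_subset_right hEΩ]
    exact integral_biUnion_finset s (fun _ _ => measurableSet_Ioo.prod measurableSet_Ioo) hrect
      fun _ _ => (continuous_div2 hη).integrableOn_Icc.mono_set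
        (by rw [← Icc_prod_Icc]; exact prod_mono Ioo_subset_Icc_self Ioo_subset_Icc_self)
  apply le_antisymm
  · refine sSup_le ?_
    rintro t ⟨η, hη, -, -, hη₁, rfl⟩
    rw [hsplit η hη]
    exact ENNReal.ofReal_le_ofReal <| Finset.sum_le_sum fun i hi =>
      integral_div2_rect_le hη hη₁ (hab i hi).le (hcd i hi).le
  · refine le_sSup ⟨rectField s a b c d, contDiff_rectField s a b c d,
      hasCompactSupport_rectField s a b c d, tsupport_rectField_subset s a b c d hΩ,
      abs_rectField_le_one a b hdisj, ?_⟩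
    rw [hsplit _ (contDiff_rectField s a b c d),
      Finset.sum_congr rfl fun i hi => integral_div2_rectField a b hdisj hi (hab i hi) (hcd i hi)]

end Rectangles

end AnisotropicPerimeter

lemma CVn_three (Ω : Set (ℝ × ℝ)) (f : ℝ × ℝ → ℝ) (P : Fin 3 → Set (ℝ × ℝ)) (c μ : Fin 3 → ℝ) :
    CVn Ω f 3 P c μ =
      (Per1 (P 0) Ω + ENNReal.ofReal (μ 0 * ∫ x in P 0, (c 0 - f x) ^ 2)) +
      (Per1 (P 0 ∪ P 1) Ω + ENNReal.ofReal (μ 1 * ∫ x in P 1, (c 1 - f x) ^ 2)) +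
      (Per1 (P 0 ∪ P 1 ∪ P 2) Ω + ENNReal.ofReal (μ 2 * ∫ x in P 2, (c 2 - f x) ^ 2)) := by
  have h₀ : ⋃ j : Fin 3, ⋃ (_ : j ≤ 0), P j = P 0 := by
    ext; simp
  have h₁ : ⋃ j : Fin 3, ⋃ (_ : j ≤ 1), P j = P 0 ∪ P 1 := by
    ext; simp [Fin.exists_fin_succ]
  have h₂ : ⋃ j : Fin 3, ⋃ (_ : j ≤ 2), P j = P 0 ∪ P 1 ∪ P 2 := by
    ext; simp [Fin.exists_fin_succ, or_assoc]
  rw [CVn, Fin.sum_univ_three, h₀, h₁, h₂]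

namespace Counterexample

open AnisotropicPerimeter Function

variable (L R : ℝ)

def left : Fin 3 → ℝ := ![-1, -(1/2), -2]

def right : Fin 3 → ℝ := ![1, 1/2, 2]

def bottom : Fin 3 → ℝ := ![-L - 1, -(1/2), L - 2]

def top : Fin 3 → ℝ := ![-L + 1, 1/2, L + 2]

/-- The squares `C₁, C₂, C₃` of the statement, indexed by `0, 1, 2`; `datum` is `f` and
`domain` is `Ω`. -/
def square (i : Fin 3) : Set (ℝ × ℝ) := Ioo (left i) (right i) ×ˢ Ioo (bottom L i) (top L i)

def A : Set (ℝ × ℝ) := square L 0 ∪ square L 1 ∪ square L 2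

def datum (x : ℝ × ℝ) : ℝ :=
  (square L 0).indicator 1 x + (square L 1).indicator 1 x + 1/2 * (square L 2).indicator 1 x

def domain : Set (ℝ × ℝ) := Ioo (-R) R ×ˢ Ioo (-R) R

def area : Fin 3 → ℝ := ![4, 1, 16]

def level : Fin 3 → ℝ := ![1, 1, 1/2]

def c : Fin 3 → ℝ := ![1, 9/17, 0]

def μ : Fin 3 → ℝ := ![85/8, 1445/72, 85/9]

def thresholdedPartition : Fin 3 → Set (ℝ × ℝ) :=
  ![square L 0, square L 1 ∪ square L 2, domain R \ closure (A L)]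

def betterPartition : Fin 3 → Set (ℝ × ℝ) :=
  ![square L 0 ∪ square L 1, square L 2, domain R \ closure (A L)]

variable {L R}

lemma pairwise_disjoint_Ioo_bottom_top (hL : 4 ≤ L) :
    Pairwise (Disjoint on fun i => Ioo (bottom L i - 1/2) (top L i + 1/2)) := by
  have hlt : ∀ i j : Fin 3, i < j → top L i + 1/2 ≤ bottom L j - 1/2 := by
    intro i j hij
    fin_cases i <;> fin_cases j <;> simp [bottom, top] at hij ⊢ <;> linarith
  intro i j hij
  rw [Function.onFun, Ioo_disjoint_Ioo]
  rcases hij.lt_or_gt with h | h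
  · exact (min_le_left _ _).trans ((hlt i j h).trans (le_max_right _ _))
  · exact (min_le_right _ _).trans ((hlt j i h).trans (le_max_left _ _))

lemma pairwise_disjoint_square (hL : 4 ≤ L) : Pairwise (Disjoint on square L) :=
  fun i j hij => disjoint_prod.2 <| Or.inr <| (pairwise_disjoint_Ioo_bottom_top hL hij).mono
    (Ioo_subset_Ioo (by linarith) (by linarith)) (Ioo_subset_Ioo (by linarith) (by linarith))

lemma datum_of_mem_square (hL : 4 ≤ L) {i : Fin 3} {x : ℝ × ℝ} (hx : x ∈ square L i) :
    datum L x = level i := by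
  have hne : ∀ j, j ≠ i → x ∉ square L j := fun j hji hj =>
    (pairwise_disjoint_square hL hji).notMem_of_mem_left hj hx
  fin_cases i <;> simp_all [datum, level]

lemma datum_of_notMem {x : ℝ × ℝ} (hx : x ∉ A L) : datum L x = 0 := by
  simp only [A, mem_union, not_or] at hx
  simp [datum, hx]

lemma volume_square (i : Fin 3) : volume (square L i) = ENNReal.ofReal (area i) := by
  rw [square, Measure.volume_eq_prod, Measure.prod_prod, Real.volume_Ioo, Real.volume_Ioo,
    ← ENNReal.ofReal_mul (by fin_cases i <;> norm_num [left, right])]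
  congr 1
  fin_cases i <;> simp [left, right, bottom, top, area] <;> ring

lemma measurableSet_square (i : Fin 3) : MeasurableSet (square L i) :=
  measurableSet_Ioo.prod measurableSet_Ioo

lemma integral_square (hL : 4 ≤ L) (g : ℝ → ℝ) (i : Fin 3) :
    ∫ x in square L i, g (datum L x) = area i * g (level i) := by
  rw [setIntegral_congr_fun (measurableSet_square i) fun x hx => by
      rw [datum_of_mem_square hL hx], setIntegral_const, smul_eq_mul, measureReal_def,
    volume_square, ENNReal.toReal_ofReal (by fin_cases i <;> norm_num [area])]

lemma integral_union_square (hL : 4 ≤ L) (g : ℝ → ℝ) {i j : Fin 3} (hij : i ≠ j) :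
    ∫ x in square L i ∪ square L j, g (datum L x) =
      area i * g (level i) + area j * g (level j) := by
  have hint : ∀ k, IntegrableOn (fun x => g (datum L x)) (square L k) := fun k =>
    (integrableOn_congr_fun (fun x hx => by rw [datum_of_mem_square hL hx])
      (measurableSet_square k)).2 (integrableOn_const (by simp [volume_square]))
  rw [setIntegral_union (pairwise_disjoint_square hL hij) (measurableSet_square j) (hint i)
    (hint j), integral_square hL, integral_square hL]

lemma integral_outside (g : ℝ → ℝ) (hg : g 0 = 0) :
    ∫ x in domain R \ closure (A L), g (datum L x) = 0 :=
  setIntegral_eq_zero_of_forall_eq_zero fun x hx => by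
    rw [datum_of_notMem fun h => hx.2 (subset_closure h), hg]

lemma Icc_prod_Icc_subset_domain (hL : 4 ≤ L) (hR : L + 3 ≤ R) (i : Fin 3) :
    Icc (left i - 1/2) (right i + 1/2) ×ˢ Icc (bottom L i - 1/2) (top L i + 1/2) ⊆ domain R := by
  refine Set.prod_mono (Icc_subset_Ioo ?_ ?_) (Icc_subset_Ioo ?_ ?_) <;>
    fin_cases i <;> simp [left, right, bottom, top] <;> linarith

lemma square_subset_domain (hL : 4 ≤ L) (hR : L + 3 ≤ R) (i : Fin 3) : square L i ⊆ domain R :=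
  (Set.prod_mono (Ioo_subset_Icc_self.trans (Icc_subset_Icc (by linarith) (by linarith)))
    (Ioo_subset_Icc_self.trans (Icc_subset_Icc (by linarith) (by linarith)))).trans
    (Icc_prod_Icc_subset_domain hL hR i)

lemma Per1_biUnion_square (hL : 4 ≤ L) (hR : L + 3 ≤ R) (s : Finset (Fin 3)) :
    Per1 (⋃ i ∈ s, square L i) (domain R) =
      ENNReal.ofReal (∑ i ∈ s, (2 * (right i - left i) + 2 * (top L i - bottom L i))) :=
  Per1_biUnion_rect s left right (bottom L) (top L)
    (fun i _ => by fin_cases i <;> norm_num [left, right])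
    (fun i _ => by fin_cases i <;> norm_num [bottom, top] <;> linarith)
    ((pairwise_disjoint_Ioo_bottom_top hL).set_pairwise _)
    fun i _ => Icc_prod_Icc_subset_domain hL hR i

lemma Per1_square_zero (hL : 4 ≤ L) (hR : L + 3 ≤ R) :
    Per1 (square L 0) (domain R) = ENNReal.ofReal 8 := by
  have h := Per1_biUnion_square hL hR {0}
  rw [Finset.set_biUnion_singleton, Finset.sum_singleton] at h
  rw [h]
  norm_num [left, right, bottom, top]

lemma Per1_square_zero_union_one (hL : 4 ≤ L) (hR : L + 3 ≤ R) :
    Per1 (square L 0 ∪ square L 1) (domain R) = ENNReal.ofReal 12 := by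
  have h := Per1_biUnion_square hL hR {0, 1}
  simp only [Finset.set_biUnion_insert, Finset.set_biUnion_singleton] at h
  rw [h]
  norm_num [left, right, bottom, top]

lemma Per1_A (hL : 4 ≤ L) (hR : L + 3 ≤ R) :
    Per1 (A L) (domain R) = ENNReal.ofReal 28 := by
  have h := Per1_biUnion_square hL hR {0, 1, 2}
  simp only [Finset.set_biUnion_insert, Finset.set_biUnion_singleton, ← union_assoc] at h
  rw [A, h, Finset.sum_insert (by decide), Finset.sum_pair (by decide)]
  simp only [left, right, bottom, top, Matrix.cons_val]
  norm_num

lemma volume_closure_A_diff : volume (closure (A L) \ A L) = 0 := by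
  have hsq : ∀ i, volume (closure (square L i) \ square L i) = 0 := fun i => by
    rw [square, ← (isOpen_Ioo.prod isOpen_Ioo).frontier_eq]
    exact ((convex_Ioo _ _).prod (convex_Ioo _ _)).addHaar_frontier volume
  refine measure_mono_null ?_ (measure_union_null (measure_union_null (hsq 0) (hsq 1)) (hsq 2))
  rintro x ⟨hx, hxA⟩
  simp only [A, closure_union, mem_union, not_or] at hx hxA
  rcases hx with (h | h) | h
  exacts [Or.inl (Or.inl ⟨h, hxA.1.1⟩), Or.inl (Or.inr ⟨h, hxA.1.2⟩), Or.inr ⟨h, hxA.2⟩]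

lemma volume_domain_diff :
    volume (domain R \ (A L ∪ (domain R \ closure (A L)))) = 0 := by
  refine measure_mono_null ?_ (volume_closure_A_diff (L := L))
  rintro x ⟨hxΩ, hx⟩
  exact ⟨by_contra fun h => hx (Or.inr ⟨hxΩ, h⟩), fun h => hx (Or.inl h)⟩

lemma Per1_A_union_outside : Per1 (A L ∪ (domain R \ closure (A L))) (domain R) = 0 :=
  Per1_eq_zero_of_measure_diff_eq_zero volume_domain_diff

lemma square_subset_A (i : Fin 3) : square L i ⊆ A L := by
  fin_cases i
  exacts [subset_union_left.trans subset_union_left, subset_union_right.trans subset_union_left,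
    subset_union_right]

lemma disjoint_square_outside (i : Fin 3) : Disjoint (square L i) (domain R \ closure (A L)) :=
  disjoint_left.2 fun _ hx hx' => hx'.2 (subset_closure (square_subset_A i hx))

lemma outside_nonempty (hL : 4 ≤ L) (hR : L + 3 ≤ R) : (domain R \ closure (A L)).Nonempty := by
  have hright : ∀ i, right i ≤ 2 := by
    intro i
    fin_cases i <;> norm_num [right]
  have hA : A L ⊆ {x | x.1 ≤ 2} := by
    rintro x ((hx | hx) | hx) <;> exact (hx.1.2.trans_le (hright _)).le
  refine ⟨(3, 0), ⟨⟨⟨by linarith, by linarith⟩, by linarith, by linarith⟩, fun h => ?_⟩⟩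
  have := closure_minimal hA (isClosed_le continuous_fst continuous_const) h
  norm_num at this

lemma iUnion_betterPartition :
    ⋃ i, betterPartition L R i = A L ∪ (domain R \ closure (A L)) := by
  ext x
  simp [betterPartition, A, Fin.exists_fin_succ, or_assoc]

lemma isPartition_betterPartition (hL : 4 ≤ L) (hR : L + 3 ≤ R) :
    IsPartition (domain R) 3 (betterPartition L R) := by
  have hsub := square_subset_domain hL hR
  have hdisj := pairwise_disjoint_square hL
  have h₀₁ : Disjoint (square L 0 ∪ square L 1) (square L 2) :=
    disjoint_union_left.2 ⟨hdisj (by decide), hdisj (by decide)⟩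
  have h₀₂ : Disjoint (square L 0 ∪ square L 1) (domain R \ closure (A L)) :=
    disjoint_union_left.2 ⟨disjoint_square_outside 0, disjoint_square_outside 1⟩
  have h₁₂ : Disjoint (square L 2) (domain R \ closure (A L)) := disjoint_square_outside 2
  refine ⟨fun i => ?_, fun i => ?_, fun i => ?_, fun i j hij => ?_, ?_⟩
  · fin_cases i
    exacts [(measurableSet_square 0).union (measurableSet_square 1), measurableSet_square 2,
      (measurableSet_Ioo.prod measurableSet_Ioo).diff isClosed_closure.measurableSet]
  · fin_cases i
    · exact ⟨(0, -L), Or.inl ⟨by norm_num [left, right], by norm_num [bottom, top]⟩⟩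
    · exact ⟨(0, L), show (0, L) ∈ square L 2 by simp [square, left, right, bottom, top]⟩
    · exact outside_nonempty hL hR
  · fin_cases i
    exacts [union_subset (hsub 0) (hsub 1), hsub 2, sdiff_subset]
  · fin_cases i <;> fin_cases j
    all_goals first
      | exact absurd rfl hij | exact h₀₁ | exact h₀₁.symm | exact h₀₂ | exact h₀₂.symm
      | exact h₁₂ | exact h₁₂.symm
  · have hAΩ : A L ⊆ domain R := union_subset (union_subset (hsub 0) (hsub 1)) (hsub 2)
    rw [iUnion_betterPartition, sdiff_eq_empty.2 (union_subset hAΩ sdiff_subset), union_empty]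
    exact volume_domain_diff

lemma CVn_betterPartition (hL : 4 ≤ L) (hR : L + 3 ≤ R) :
    CVn (domain R) (datum L) 3 (betterPartition L R) c μ =
      ENNReal.ofReal (725/72) * volume (square L 0) := by
  simp only [CVn_three, betterPartition, c, μ, Matrix.cons_val]
  rw [Per1_square_zero_union_one hL hR, ← A, Per1_A hL hR, Per1_A_union_outside,
    integral_union_square hL (fun t => (1 - t) ^ 2) (by decide : (0 : Fin 3) ≠ 1),
    integral_square hL (fun t => (9/17 - t) ^ 2), integral_outside (fun t => (0 - t) ^ 2) (by simp),
    volume_square]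
  simp only [area, level, Matrix.cons_val]
  rw [← ENNReal.ofReal_zero, ← ENNReal.ofReal_mul (by norm_num)]
  repeat rw [← ENNReal.ofReal_add (by positivity) (by positivity)]
  norm_num

lemma CVn_thresholdedPartition (hL : 4 ≤ L) (hR : L + 3 ≤ R) :
    CVn (domain R) (datum L) 3 (thresholdedPartition L R) c μ =
      ENNReal.ofReal (733/72) * volume (square L 0) := by
  simp only [CVn_three, thresholdedPartition, c, μ, Matrix.cons_val]
  rw [Per1_square_zero hL hR, ← union_assoc, ← A, Per1_A hL hR, Per1_A_union_outside,
    integral_square hL (fun t => (1 - t) ^ 2),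
    integral_union_square hL (fun t => (9/17 - t) ^ 2) (by decide : (1 : Fin 3) ≠ 2),
    integral_outside (fun t => (0 - t) ^ 2) (by simp), volume_square]
  simp only [area, level, Matrix.cons_val]
  rw [← ENNReal.ofReal_zero, ← ENNReal.ofReal_mul (by norm_num)]
  repeat rw [← ENNReal.ofReal_add (by positivity) (by positivity)]
  norm_num

lemma CVn_betterPartition_lt (hL : 4 ≤ L) (hR : L + 3 ≤ R) :
    CVn (domain R) (datum L) 3 (betterPartition L R) c μ <
      CVn (domain R) (datum L) 3 (thresholdedPartition L R) c μ := by
  rw [CVn_betterPartition hL hR, CVn_thresholdedPartition hL hR, volume_square,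
    ← ENNReal.ofReal_mul (by norm_num), ← ENNReal.ofReal_mul (by norm_num),
    ENNReal.ofReal_lt_ofReal_iff (by norm_num [area])]
  norm_num [area]

lemma mean_square_one_union_two (hL : 4 ≤ L) :
    (∫ x in square L 1 ∪ square L 2, datum L x) / (volume (square L 1 ∪ square L 2)).toReal =
      9/17 := by
  rw [integral_union_square hL (fun t => t) (by decide : (1 : Fin 3) ≠ 2),
    measure_union (pairwise_disjoint_square hL (by decide : (1 : Fin 3) ≠ 2))
      (measurableSet_square 2), volume_square, volume_square,
    area, level]
  simp only [Matrix.cons_val]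
  rw [← ENNReal.ofReal_add (by norm_num) (by norm_num), ENNReal.toReal_ofReal (by norm_num)]
  norm_num

lemma mean_outside :
    (∫ x in domain R \ closure (A L), datum L x) / (volume (domain R \ closure (A L))).toReal =
      0 := by
  rw [integral_outside (fun t => t) rfl, zero_div]

end Counterexample

/-- A counterexample: for the three-phase anisotropic Chan–Vese functional,
the partition obtained by thresholding the `AROF` solution is *not* a minimizer. -/
theorem thresholded_partition_not_CVn_minimizer (L R : ℝ) (hL : 4 ≤ L) (hR : L + 3 ≤ R) :
    let Ω : Set (ℝ × ℝ) := Set.Ioo (-R) R ×ˢ Set.Ioo (-R) R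
    let C₁ : Set (ℝ × ℝ) := Set.Ioo (-1 : ℝ) 1 ×ˢ Set.Ioo (-L - 1) (-L + 1)
    let C₂ : Set (ℝ × ℝ) := Set.Ioo (-(1/2) : ℝ) (1/2) ×ˢ Set.Ioo (-(1/2) : ℝ) (1/2)
    let C₃ : Set (ℝ × ℝ) := Set.Ioo (-2 : ℝ) 2 ×ˢ Set.Ioo (L - 2) (L + 2)
    let A : Set (ℝ × ℝ) := C₁ ∪ C₂ ∪ C₃
    let f : ℝ × ℝ → ℝ := fun x => C₁.indicator 1 x + C₂.indicator 1 x + (1/2) * C₃.indicator 1 x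
    let c : Fin 3 → ℝ := ![1, 9/17, 0]
    let μ : Fin 3 → ℝ := ![85/8, 1445/72, 85/9]
    (∫ x in C₂ ∪ C₃, f x) / (volume (C₂ ∪ C₃)).toReal = 9/17 ∧
    (∫ x in Ω \ closure A, f x) / (volume (Ω \ closure A)).toReal = 0 ∧
    CVn Ω f 3 ![C₁ ∪ C₂, C₃, Ω \ closure A] c μ
      = ENNReal.ofReal (725/72) * volume C₁ ∧
    CVn Ω f 3 ![C₁, C₂ ∪ C₃, Ω \ closure A] c μ
      = ENNReal.ofReal (733/72) * volume C₁ ∧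
    CVn Ω f 3 ![C₁ ∪ C₂, C₃, Ω \ closure A] c μ
      < CVn Ω f 3 ![C₁, C₂ ∪ C₃, Ω \ closure A] c μ ∧
    ¬ ∀ Q : Fin 3 → Set (ℝ × ℝ), IsPartition Ω 3 Q →
        CVn Ω f 3 ![C₁, C₂ ∪ C₃, Ω \ closure A] c μ ≤ CVn Ω f 3 Q c μ := by
  intro Ω C₁ C₂ C₃ A f c μ
  have hlt := Counterexample.CVn_betterPartition_lt hL hR
  exact ⟨Counterexample.mean_square_one_union_two hL, Counterexample.mean_outside,
    Counterexample.CVn_betterPartition hL hR, Counterexample.CVn_thresholdedPartition hL hR, hlt,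
    fun hmin => hlt.not_ge (hmin _ (Counterexample.isPartition_betterPartition hL hR))⟩
end
end
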